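/- arXiv:2006.14777 — 2 statements merged into one kernel-verified Lean document; each statement's English description precedes it below -/
import Mathlib

section
/- With the setup of the graded algebra A = ⊕_{φ ∈ 𝔊} A_φ arising from an action of a finite abelian group 𝒢, let K be the kernel of the 𝒢-action on A, K^⊥ = {φ ∈ 𝔊 : φ(h)=1 for all h ∈ K}, and let x act on A with g∗(x∗a) = χ(g)(x∗(g∗a)) for all g, a. If χ ∉ K^⊥, then x∗a = 0 for all a ∈ A. -/
theorem eq_zero_of_eq_smul_self {R M : Type*} [Ring R] [IsDomain R] [AddCommGroup M]
    [Module R M] [Module.IsTorsionFree R M] {c : R} {v : M} (hc : c ≠ 1) (hv : v = c • v) :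
    v = 0 := by
  have hsmul : (c - 1) • v = 0 := by rw [sub_smul, one_smul, ← hv, sub_self]
  exact (smul_eq_zero.mp hsmul).resolve_left (sub_ne_zero.mpr hc)

theorem eq_zero_of_skew_commute_of_forall_fixed {R M : Type*} [Ring R] [IsDomain R]
    [AddCommGroup M] [Module R M] [Module.IsTorsionFree R M] {S T : M → M} {c : R}
    (hS : ∀ a, S a = a) (hST : ∀ a, S (T a) = c • T (S a)) (hc : c ≠ 1) (a : M) : T a = 0 :=
  eq_zero_of_eq_smul_self hc <| (hS (T a)).symm.trans <| by rw [hST, hS]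

theorem stmt6_general {F A : Type*} [Field F] [AddCommGroup A] [Module F A]
    {G : Type*} [CommGroup G]
    (act : G → A →ₗ[F] A) (xact : A →ₗ[F] A)
    (χ : G →* Fˣ)
    (hrel : ∀ (g : G) (a : A), act g (xact a) = (χ g : F) • xact (act g a))
    (hχ : ∃ h : G, (∀ a : A, act h a = a) ∧ (χ h : F) ≠ 1) :
    ∀ a : A, xact a = 0 := by
  obtain ⟨h, hfix, hne⟩ := hχ
  exact eq_zero_of_skew_commute_of_forall_fixed hfix (hrel h) hne

/-- With `A` graded by characters of `G` (homogeneous elements span),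
if `χ` is not in the orthogonal of the kernel `K` of the action, then the
skew-primitive `x` acts as zero. -/
theorem stmt6 {F A : Type*} [Field F] [AddCommGroup A] [Module F A]
    {G : Type*} [CommGroup G] [Fintype G]
    (act : G → A →ₗ[F] A) (xact : A →ₗ[F] A)
    (χ : G →* Fˣ)
    (hgrading : ∀ a : A, a ∈ Submodule.span F
      {b : A | ∃ γ : G →* Fˣ, ∀ g : G, act g b = (γ g : F) • b})
    (hrel : ∀ (g : G) (a : A), act g (xact a) = (χ g : F) • xact (act g a))
    (hχ : ∃ h : G, (∀ a : A, act h a = a) ∧ (χ h : F) ≠ 1) :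
    ∀ a : A, xact a = 0 :=
  stmt6_general act xact χ hrel hχ
end

section
/- Let n ≥ 3 be odd, ω ∈ F a primitive n-th root of unity, λ ∈ F with λ^n = 1, and set u(a) = λ·diag(1, ω²), u(x) = [[0,0],[p,0]], u(y) = [[0,q],[0,0]] in M_2(F). Then u(x)u(y) − u(y)u(x) = u(a) − τ·u(a)^{-1} holds if and only if τ = λ²(1+ω²)/(1+ω^{n−2}) and pq = λ(ω² − ω^{n−2})/(1 + ω^{n−2}), provided 1 + ω^{n−2} ≠ 0. -/
/-! Both sides are diagonal: the commutator is `diag(-pq, pq)`, and `ω ^ (n - 2) = ω⁻²` makes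
`u(a)⁻¹ = λ⁻¹ diag(1, ω ^ (n - 2))`. Comparing diagonals gives a linear system in `τ` and `pq`
with determinant `-λ⁻¹ (1 + ω⁻²)`, hence the unique solution. -/

theorem Matrix.inv_fin_two_diag {K : Type*} [Field K] {a d : K} (ha : a ≠ 0) (hd : d ≠ 0) :
    (!![a, 0; 0, d])⁻¹ = !![a⁻¹, 0; 0, d⁻¹] :=
  Matrix.inv_eq_right_inv <| by simp [ha, hd, Matrix.one_fin_two]

theorem Matrix.lower_mul_upper_sub_upper_mul_lower {R : Type*} [CommRing R] (p q : R) :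
    !![0, 0; p, 0] * !![0, q; 0, 0] - !![0, q; 0, 0] * !![0, 0; p, 0] =
      !![-(p * q), 0; 0, p * q] := by
  simp [mul_comm q p]

theorem diagonal_relation_iff {K : Type*} [Field K] {lam a : K} (s τ : K) (hlam : lam ≠ 0)
    (ha : a ≠ 0) (hden : 1 + a⁻¹ ≠ 0) :
    (-s = lam - τ * lam⁻¹ ∧ s = lam * a - τ * (lam * a)⁻¹) ↔
      (τ = lam ^ 2 * (1 + a) / (1 + a⁻¹) ∧ s = lam * (a - a⁻¹) / (1 + a⁻¹)) := by
  have ha1 : a + 1 ≠ 0 := by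
    contrapose! hden; field_simp; linear_combination hden
  constructor
  · rintro ⟨h1, h2⟩
    field_simp at h1 h2 ⊢
    constructor
    · linear_combination a * h1 + h2
    · exact mul_left_cancel₀ hlam (by linear_combination h2 - h1)
  · rintro ⟨rfl, rfl⟩
    constructor <;> field_simp <;> ring

theorem stmt16_general {F : Type*} [Field F] (n : ℕ) (hn3 : 3 ≤ n)
    (ω : F) (hω : IsPrimitiveRoot ω n)
    (lam : F) (hlam : lam ^ n = 1)
    (hden : 1 + ω ^ (n - 2) ≠ 0)
    (p q τ : F)
    (ua ux uy : Matrix (Fin 2) (Fin 2) F)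
    (hua : ua = lam • !![(1 : F), 0; 0, ω ^ 2])
    (hux : ux = !![(0 : F), 0; p, 0])
    (huy : uy = !![(0 : F), q; 0, 0]) :
    (ux * uy - uy * ux = ua - τ • ua⁻¹) ↔
      (τ = lam ^ 2 * (1 + ω ^ 2) / (1 + ω ^ (n - 2)) ∧
       p * q = lam * (ω ^ 2 - ω ^ (n - 2)) / (1 + ω ^ (n - 2))) := by
  have hlam0 : lam ≠ 0 := ne_zero_pow (by omega) (hlam ▸ one_ne_zero)
  have hω2 : ω ^ 2 ≠ 0 := pow_ne_zero 2 (hω.ne_zero (by omega))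
  have hω_inv : ω ^ (n - 2) = (ω ^ 2)⁻¹ :=
    eq_inv_of_mul_eq_one_left <| by rw [pow_sub_mul_pow ω (by omega), hω.pow_eq_one]
  have hua' : ua = !![lam, 0; 0, lam * ω ^ 2] := by simp [hua]
  rw [hux, huy, hua', Matrix.lower_mul_upper_sub_upper_mul_lower,
    Matrix.inv_fin_two_diag hlam0 (mul_ne_zero hlam0 hω2),
    hω_inv, ← diagonal_relation_iff _ _ hlam0 hω2 (hω_inv ▸ hden)]
  simp

/-- With `u(a) = λ·diag(1, ω²)`, `u(x) = [[0,0],[p,0]]`,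
`u(y) = [[0,q],[0,0]]`, the relation `u(x)u(y) − u(y)u(x) = u(a) − τ·u(a)⁻¹`
holds iff `τ = λ²(1+ω²)/(1+ω^{n−2})` and `pq = λ(ω² − ω^{n−2})/(1+ω^{n−2})`. -/
theorem stmt16 {F : Type*} [Field F] (n : ℕ) (hn3 : 3 ≤ n) (hodd : Odd n)
    (ω : F) (hω : IsPrimitiveRoot ω n)
    (lam : F) (hlam : lam ^ n = 1)
    (hden : 1 + ω ^ (n - 2) ≠ 0)
    (p q τ : F)
    (ua ux uy : Matrix (Fin 2) (Fin 2) F)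
    (hua : ua = lam • !![(1 : F), 0; 0, ω ^ 2])
    (hux : ux = !![(0 : F), 0; p, 0])
    (huy : uy = !![(0 : F), q; 0, 0]) :
    (ux * uy - uy * ux = ua - τ • ua⁻¹) ↔
      (τ = lam ^ 2 * (1 + ω ^ 2) / (1 + ω ^ (n - 2)) ∧
       p * q = lam * (ω ^ 2 - ω ^ (n - 2)) / (1 + ω ^ (n - 2))) :=
  stmt16_general n hn3 ω hω lam hlam hden p q τ ua ux uy hua hux huy
end
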